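/- arXiv:2511.08774 — 2 statements merged into one kernel-verified Lean document; each statement's English description precedes it below -/
import Mathlib

section
/- Let a : U → ℝ^d be locally Lipschitz. Then for distinct ξ ≠ η ∈ ℝ^{d−1}, the characteristic curves s ↦ Φ(s, ξ) and s ↦ Φ(s, η) of x' = a(x) with initial conditions (0, ξ) and (0, η) have disjoint images: there exist no times s, t with Φ(s, ξ) = Φ(t, η). -/
/-!
Two solutions of an autonomous, locally Lipschitz ODE that meet are time-translates of each
other, so the trajectory through `(0, ξ)` would also pass through `(0, η)` at some time `c`.
Then `c ≠ 0` because `ξ ≠ η`, and the first coordinate of that trajectory vanishes both at `0`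
and at `c`. But `a₁ > 0` on the hyperplane means the first coordinate crosses zero upwards at
each of its zeros, which a continuous function can do at most once.
-/

open Set Filter Topology SignType

lemma subsingleton_zeros_of_hasDerivAt_pos {f f' : ℝ → ℝ} (hf : ∀ x, HasDerivAt f (f' x) x)
    (hpos : ∀ x, f x = 0 → 0 < f' x) : (f ⁻¹' {0}).Subsingleton := by
  have hsign : ∀ x, f x = 0 → ∀ᶠ u in 𝓝 x, sign (f u) = sign (u - x) := fun x hx =>
    eventually_nhdsWithin_sign_eq_of_deriv_pos ((hf x).deriv ▸ hpos x hx) hx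
  have hcont : Continuous f := continuous_iff_continuousAt.2 fun x => (hf x).continuousAt
  suffices ∀ a b, f a = 0 → f b = 0 → ¬ a < b by
    intro a ha b hb
    by_contra hab
    rcases lt_or_gt_of_ne hab with h | h
    exacts [this a b ha hb h, this b a hb ha h]
  intro a b ha hb hab
  -- Continuous induction: `f ≥ 0` propagates to the right, since at a zero `f` turns positive.
  have hnonneg : Icc a b ⊆ {u | 0 ≤ f u} := by
    refine IsClosed.Icc_subset_of_forall_mem_nhdsWithin
      ((isClosed_le continuous_const hcont).inter isClosed_Icc) ha.ge fun x ⟨hx, _⟩ => ?_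
    rcases (show (0 : ℝ) ≤ f x from hx).eq_or_lt with hx0 | hx0
    · filter_upwards [nhdsWithin_le_nhds (hsign x hx0.symm), self_mem_nhdsWithin] with u hu hxu
      rw [sign_pos (sub_pos.2 hxu), sign_eq_one_iff] at hu
      exact hu.le
    · exact nhdsWithin_le_nhds
        ((hcont.continuousAt.eventually (eventually_gt_nhds hx0)).mono fun _ => le_of_lt)
  have hneg : ∀ᶠ u in 𝓝[<] b, u ∈ Icc a b ∧ f u < 0 := by
    filter_upwards [nhdsWithin_le_nhds (hsign b hb), Ioo_mem_nhdsLT hab] with u hu hu'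
    rw [sign_neg (sub_neg.2 hu'.2), sign_eq_neg_one_iff] at hu
    exact ⟨Ioo_subset_Icc_self hu', hu⟩
  obtain ⟨u, hu, hfu⟩ := hneg.exists
  exact (hnonneg hu : 0 ≤ f u).not_gt hfu

theorem LocallyLipschitz.eq_of_hasDerivAt_of_eq {E : Type*} [NormedAddCommGroup E]
    [NormedSpace ℝ E] {v : E → E} (hv : LocallyLipschitz v) {f g : ℝ → E}
    (hf : ∀ t, HasDerivAt f (v (f t)) t) (hg : ∀ t, HasDerivAt g (v (g t)) t) {t₀ : ℝ}
    (heq : f t₀ = g t₀) : f = g := by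
  have hfc : Continuous f := continuous_iff_continuousAt.2 fun t => (hf t).continuousAt
  have hgc : Continuous g := continuous_iff_continuousAt.2 fun t => (hg t).continuousAt
  have hopen : IsOpen {t | f t = g t} := by
    refine isOpen_iff_mem_nhds.2 fun t ht => ?_
    obtain ⟨K, V, hV, hKV⟩ := hv (f t)
    have hVg : V ∈ 𝓝 (g t) := ht ▸ hV
    exact ODE_solution_unique_of_eventually (v := fun _ => v) (s := fun _ => V)
      (.of_forall fun _ => hKV)
      (Eventually.mono (hfc.continuousAt.preimage_mem_nhds hV) fun u hu => ⟨hf u, hu⟩)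
      (Eventually.mono (hgc.continuousAt.preimage_mem_nhds hVg) fun u hu => ⟨hg u, hu⟩) ht
  have hclopen : IsClopen {t | f t = g t} := ⟨isClosed_eq hfc hgc, hopen⟩
  funext t
  exact (hclopen.eq_univ ⟨t₀, heq⟩ ▸ mem_univ t :)

/-- Characteristic curves issued from distinct points of the hyperplane `{x₁ = 0}`
have disjoint images (with `a` locally Lipschitz and `a₁ > 0` on the hyperplane). -/
theorem stmt11 (d : ℕ)
    (a : (Fin (d+1) → ℝ) → (Fin (d+1) → ℝ))
    (hlip : LocallyLipschitz a)
    (hpos : ∀ η : Fin d → ℝ, 0 < a (Fin.cons 0 η) 0)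
    (ξ η : Fin d → ℝ) (hne : ξ ≠ η)
    (xξ xη : ℝ → Fin (d+1) → ℝ)
    (hxξ0 : xξ 0 = Fin.cons 0 ξ) (hxη0 : xη 0 = Fin.cons 0 η)
    (hxξ : ∀ s : ℝ, HasDerivAt xξ (a (xξ s)) s)
    (hxη : ∀ s : ℝ, HasDerivAt xη (a (xη s)) s) :
    ∀ s t : ℝ, xξ s ≠ xη t := by
  intro s t h
  have htranslate : (fun u => xξ (u + (s - t))) = xη :=
    hlip.eq_of_hasDerivAt_of_eq (fun u => (hxξ _).comp_add_const u _) hxη (t₀ := t)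
      (by rwa [add_sub_cancel])
  have hreturn : xη (t - s) = Fin.cons 0 ξ := by
    rw [← htranslate]
    dsimp only
    rw [sub_add_sub_cancel, sub_self, hxξ0]
  have hcross : ∀ u, xη u 0 = 0 → 0 < a (xη u) 0 := fun u hu => by
    simpa only [← hu, Fin.cons_self_tail] using hpos (Fin.tail (xη u))
  have hts : t - s = 0 :=
    subsingleton_zeros_of_hasDerivAt_pos (f := fun u => xη u 0)
      (fun u => hasDerivAt_pi.1 (hxη u) 0) hcross (by simp [hreturn]) (by simp [hxη0])
  rw [hts, hxη0] at hreturn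
  exact hne (Fin.cons_right_injective 0 hreturn).symm
end

section
/- Let a be globally P-Lipschitz on U ⊇ [−δ', ∞) × ℝ^{d−1} with a₁(0, ξ) ≥ α > 0 and |a(0,ξ)| ≤ β for all ξ. Set δ = (α/2)·min(1/P, ℓ) where ℓ is as in the local-existence estimate. Then a₁(x₁, η) > α/2 for all |x₁| < δ and all η ∈ ℝ^{d−1}; moreover every point (x₁, η) with x₁ ∈ (−δ, 0) lies on a characteristic curve issued from the hyperplane {0} × ℝ^{d−1}: there exist ξ ∈ ℝ^{d−1} and t₂ ∈ (0, ℓ) with Φ(−t₂, ξ) = (x₁, η). -/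
/-!
Lipschitz continuity moves `a₁` by at most `P |x₁|` off the hyperplane, so `a₁ > α / 2` on the
slab `|x₁| < δ` because `P δ ≤ α / 2`. Starting from `(x₁, η)` with `-δ < x₁ < 0`, the
Picard–Lindelöf solution exists for time `T = 2 |x₁| / α` (as `P T < 1`); while its first
coordinate stays in `(-δ, 0)` it grows at rate `> α / 2`, so it reaches `0` at some
`t₂ ∈ (0, T]`, and `T < ℓ`. By uniqueness of solutions, the characteristic through the hit point
`(0, ξ)` of the hyperplane, run backwards for time `t₂`, is this solution and lands on `(x₁, η)`.
-/

open Set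

theorem Fin.dist_cons_cons {α : Type*} [PseudoMetricSpace α] {n : ℕ} (x y : α)
    (η : Fin n → α) : dist (Fin.cons x η : Fin (n + 1) → α) (Fin.cons y η) = dist x y :=
  le_antisymm ((dist_pi_le_iff dist_nonneg).2 (Fin.cases (by simp) (by simp)))
    (by simpa using dist_le_pi_dist (Fin.cons x η : Fin (n + 1) → α) (Fin.cons y η) 0)

section Lipschitz

variable {n : ℕ} {K : NNReal}

theorem LipschitzWith.abs_apply_cons_sub_apply_cons_le {ι : Type*} [Fintype ι]
    {f : (Fin (n + 1) → ℝ) → ι → ℝ} (hf : LipschitzWith K f) (x y : ℝ) (η : Fin n → ℝ)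
    (i : ι) : |f (Fin.cons x η) i - f (Fin.cons y η) i| ≤ K * |x - y| :=
  calc |f (Fin.cons x η) i - f (Fin.cons y η) i|
      = dist (f (Fin.cons x η) i) (f (Fin.cons y η) i) := (Real.dist_eq _ _).symm
    _ ≤ dist (f (Fin.cons x η)) (f (Fin.cons y η)) := dist_le_pi_dist _ _ i
    _ ≤ K * dist (Fin.cons x η : Fin (n + 1) → ℝ) (Fin.cons y η) := hf.dist_le_mul _ _
    _ = K * |x - y| := by rw [Fin.dist_cons_cons, Real.dist_eq]

theorem LipschitzWith.lt_apply_cons_zero {v : (Fin (n + 1) → ℝ) → Fin (n + 1) → ℝ}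
    (hv : LipschitzWith K v) {α c x : ℝ} (hα : ∀ ξ : Fin n → ℝ, α ≤ v (Fin.cons 0 ξ) 0)
    (hx : K * |x| < α - c) (η : Fin n → ℝ) : c < v (Fin.cons x η) 0 := by
  have h := (abs_le.1 (hv.abs_apply_cons_sub_apply_cons_le x 0 η 0)).1
  rw [sub_zero] at h
  linarith [hα η]

end Lipschitz

theorem exists_mem_Icc_eq_zero_of_lt_deriv {f f' : ℝ → ℝ} {a b c δ : ℝ} (hab : a ≤ b)
    (hf : ∀ t ∈ Icc a b, HasDerivWithinAt f (f' t) (Icc a b) t)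
    (hslope : ∀ t ∈ Icc a b, f t ∈ Ioo (-δ) 0 → c < f' t)
    (hc : 0 ≤ c) (ha : f a ∈ Ioc (-δ) 0) (hb : 0 ≤ f a + c * (b - a)) :
    ∃ t ∈ Icc a b, f t = 0 := by
  have hcont : ContinuousOn f (Icc a b) := fun t ht => (hf t ht).continuousWithinAt
  by_contra! hne
  have hneg : ∀ t ∈ Icc a b, f t < 0 := by
    intro t ht
    by_contra! hpos
    obtain ⟨s, hs, hs0⟩ := intermediate_value_Icc ht.1
      (hcont.mono (Icc_subset_Icc_right ht.2)) ⟨ha.2, hpos⟩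
    exact hne s (Icc_subset_Icc_right ht.2 hs) hs0
  have hlow : ∀ t ∈ Icc a b, -f t ≤ -(f a + c * (t - a)) := by
    refine image_le_of_deriv_right_lt_deriv_boundary (f' := fun t => -f' t)
      (B' := fun _ => -c) hcont.neg
      (fun t ht => ((hf t (Ico_subset_Icc_self ht)).mono_of_mem_nhdsWithin
        (Icc_mem_nhdsGE_of_mem ht)).neg) (by simp)
      (fun t => ((((hasDerivAt_id t).sub_const a).const_mul c).const_add (f a)).neg.congr_deriv
        (by ring)) ?_
    intro t ht heq
    have hlin : f t = f a + c * (t - a) := neg_inj.1 heq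
    have hin : f t ∈ Ioo (-δ) 0 :=
      ⟨by nlinarith [ha.1, ht.1], hneg t (Ico_subset_Icc_self ht)⟩
    simpa using hslope t (Ico_subset_Icc_self ht) hin
  linarith [hlow b (right_mem_Icc.2 hab), hneg b (right_mem_Icc.2 hab)]

section ODE

variable {E : Type*} [NormedAddCommGroup E] [NormedSpace ℝ E] {v : E → E} {K : NNReal}

theorem LipschitzWith.exists_hasDerivWithinAt_Icc [CompleteSpace E] (hv : LipschitzWith K v)
    (x₀ : E) {T : ℝ} (hT : 0 ≤ T) (hKT : K * T < 1) :
    ∃ ψ : ℝ → E, ψ 0 = x₀ ∧ ∀ t ∈ Icc 0 T, HasDerivWithinAt ψ (v (ψ t)) (Icc 0 T) t := by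
  -- the radius `R` solves `R = (‖v x₀‖ + K R) T`
  set R : NNReal := ⟨‖v x₀‖ * T / (1 - K * T), div_nonneg (by positivity) (by linarith)⟩
  have hR : (R : ℝ) * (1 - K * T) = ‖v x₀‖ * T := div_mul_cancel₀ _ (by linarith)
  refine IsPicardLindelof.exists_eq_forall_mem_Icc_hasDerivWithinAt₀
    (IsPicardLindelof.of_time_independent (t₀ := ⟨0, left_mem_Icc.2 hT⟩) (x₀ := x₀) (a := R)
      (r := 0) (L := ‖v x₀‖₊ + K * R) (fun x hx => ?_) hv.lipschitzOnWith ?_)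
  · have hvx : dist (v x) (v x₀) ≤ K * R :=
      (hv.dist_le_mul x x₀).trans (by gcongr; exact Metric.mem_closedBall.1 hx)
    calc ‖v x‖ ≤ ‖v x₀‖ + ‖v x - v x₀‖ := norm_le_norm_add_norm_sub' _ _
      _ ≤ ‖v x₀‖ + K * R := by rw [← dist_eq_norm]; gcongr
  · simp only [NNReal.coe_add, coe_nnnorm, NNReal.coe_mul, sub_zero, max_eq_left hT,
      NNReal.coe_zero]
    linarith

theorem LipschitzWith.eqOn_Icc_of_hasDerivWithinAt_of_eq_right (hv : LipschitzWith K v)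
    {f g : ℝ → E} {a b : ℝ}
    (hf : ∀ t ∈ Icc a b, HasDerivWithinAt f (v (f t)) (Icc a b) t)
    (hg : ∀ t ∈ Icc a b, HasDerivWithinAt g (v (g t)) (Icc a b) t) (hb : f b = g b) :
    EqOn f g (Icc a b) :=
  ODE_solution_unique_of_mem_Icc_left (v := fun _ => v) (s := fun _ => univ)
    (fun _ _ => hv.lipschitzOnWith) (fun t ht => (hf t ht).continuousWithinAt)
    (fun t ht => (hf t (Ioc_subset_Icc_self ht)).mono_of_mem_nhdsWithin
      (Icc_mem_nhdsLE_of_mem ht)) (fun _ _ => mem_univ _)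
    (fun t ht => (hg t ht).continuousWithinAt)
    (fun t ht => (hg t (Ioc_subset_Icc_self ht)).mono_of_mem_nhdsWithin
      (Icc_mem_nhdsLE_of_mem ht)) (fun _ _ => mem_univ _) hb

end ODE

section Hyperplane

variable {n : ℕ} {v : (Fin (n + 1) → ℝ) → Fin (n + 1) → ℝ} {K : NNReal}

theorem LipschitzWith.exists_solution_reaches_hyperplane (hv : LipschitzWith K v) {c δ x₁ : ℝ}
    (hspeed : ∀ y : Fin (n + 1) → ℝ, y 0 ∈ Ioo (-δ) 0 → c < v y 0) (hc : 0 < c)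
    (hx₁ : x₁ ∈ Ioo (-δ) 0) (hK : K * (-x₁ / c) < 1) (η : Fin n → ℝ) :
    ∃ (ψ : ℝ → Fin (n + 1) → ℝ) (t₂ : ℝ), ψ 0 = Fin.cons x₁ η ∧ 0 < t₂ ∧ t₂ ≤ -x₁ / c ∧
      ψ t₂ 0 = 0 ∧ ∀ t ∈ Icc 0 t₂, HasDerivWithinAt ψ (v (ψ t)) (Icc 0 t₂) t := by
  set T := -x₁ / c
  have hT : 0 < T := div_pos (neg_pos.2 hx₁.2) hc
  obtain ⟨ψ, hψ0, hψ⟩ := hv.exists_hasDerivWithinAt_Icc (Fin.cons x₁ η) hT.le hK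
  obtain ⟨t₂, ht₂, hψt₂⟩ : ∃ t ∈ Icc 0 T, ψ t 0 = 0 :=
    exists_mem_Icc_eq_zero_of_lt_deriv hT.le (fun t ht => hasDerivWithinAt_pi.1 (hψ t ht) 0)
      (fun t _ => hspeed (ψ t)) hc.le (by simp [hψ0, hx₁.1, hx₁.2.le])
      (by simp [hψ0, T, mul_div_cancel₀ _ hc.ne'])
  have ht₂pos : 0 < t₂ := ht₂.1.lt_of_ne <| by
    rintro rfl
    simp [hψ0, hx₁.2.ne] at hψt₂
  have hT₂ : Icc 0 t₂ ⊆ Icc 0 T := Icc_subset_Icc_right ht₂.2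
  exact ⟨ψ, t₂, hψ0, ht₂pos, ht₂.2, hψt₂, fun t ht => (hψ t (hT₂ ht)).mono hT₂⟩

theorem LipschitzWith.flow_neg_eq_of_hasDerivWithinAt (hv : LipschitzWith K v)
    {Φ : ℝ → (Fin n → ℝ) → Fin (n + 1) → ℝ} (hΦ0 : ∀ ξ, Φ 0 ξ = Fin.cons 0 ξ)
    (hflow : ∀ s ξ, HasDerivAt (fun t => Φ t ξ) (v (Φ s ξ)) s) {ψ : ℝ → Fin (n + 1) → ℝ}
    {t₂ : ℝ} (ht₂ : 0 ≤ t₂) (hψ : ∀ t ∈ Icc 0 t₂, HasDerivWithinAt ψ (v (ψ t)) (Icc 0 t₂) t)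
    (hψt₂ : ψ t₂ 0 = 0) : Φ (-t₂) (Fin.tail (ψ t₂)) = ψ 0 := by
  set ξ := Fin.tail (ψ t₂)
  have hcurve (t : ℝ) : HasDerivAt (fun t => Φ (t - t₂) ξ) (v (Φ (t - t₂) ξ)) t :=
    (hflow (t - t₂) ξ).comp_sub_const t t₂
  have hmeet : ψ t₂ = Φ (t₂ - t₂) ξ := by
    rw [sub_self, hΦ0, ← hψt₂, Fin.cons_self_tail]
  simpa using (hv.eqOn_Icc_of_hasDerivWithinAt_of_eq_right hψ
    (fun t _ => (hcurve t).hasDerivWithinAt) hmeet (left_mem_Icc.2 ht₂)).symm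

end Hyperplane

theorem stmt13_general (d : ℕ) (P α : ℝ) (hP : 0 < P) (hα : 0 < α)
    (a : (Fin (d+1) → ℝ) → (Fin (d+1) → ℝ))
    (hlip : LipschitzWith (Real.toNNReal P) a)
    (hαa : ∀ ξ : Fin d → ℝ, α ≤ a (Fin.cons 0 ξ) 0)
    (ℓ δ : ℝ)
    (hδ : δ = (α / 2) * min (1 / P) ℓ)
    (Φ : ℝ → (Fin d → ℝ) → (Fin (d+1) → ℝ))
    (hΦ0 : ∀ ξ' : Fin d → ℝ, Φ 0 ξ' = Fin.cons 0 ξ')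
    (hflow : ∀ (s : ℝ) (ξ' : Fin d → ℝ), HasDerivAt (fun t => Φ t ξ') (a (Φ s ξ')) s) :
    (∀ (x₁ : ℝ) (η : Fin d → ℝ), |x₁| < δ → α / 2 < a (Fin.cons x₁ η) 0) ∧
    (∀ (x₁ : ℝ) (η : Fin d → ℝ), x₁ ∈ Set.Ioo (-δ) 0 →
      ∃ (ξ' : Fin d → ℝ) (t₂ : ℝ), 0 < t₂ ∧ t₂ < ℓ ∧ Φ (-t₂) ξ' = Fin.cons x₁ η) := by
  have hPδ : P * δ ≤ α / 2 :=
    calc P * δ = α / 2 * (P * min (1 / P) ℓ) := by rw [hδ]; ring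
      _ ≤ α / 2 * (P * (1 / P)) := by gcongr; exact min_le_left _ _
      _ = α / 2 := by field_simp
  have hδℓ : δ ≤ α / 2 * ℓ := hδ ▸ by gcongr; exact min_le_right _ _
  have hPK : (Real.toNNReal P : ℝ) = P := Real.coe_toNNReal P hP.le
  have hspeed (x₁ : ℝ) (η : Fin d → ℝ) (hx₁ : |x₁| < δ) : α / 2 < a (Fin.cons x₁ η) 0 :=
    hlip.lt_apply_cons_zero hαa (by rw [hPK]; nlinarith [mul_lt_mul_of_pos_left hx₁ hP]) η
  refine ⟨hspeed, fun x₁ η hx₁ => ?_⟩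
  have hspeed_slab (y : Fin (d + 1) → ℝ) (hy : y 0 ∈ Ioo (-δ) 0) : α / 2 < a y 0 := by
    simpa using hspeed (y 0) (Fin.tail y) (abs_lt.2 ⟨hy.1, by linarith [hy.1, hy.2]⟩)
  have hT : α / 2 * (-x₁ / (α / 2)) = -x₁ := mul_div_cancel₀ _ (half_pos hα).ne'
  obtain ⟨ψ, t₂, hψ0, ht₂pos, ht₂T, hψt₂, hψ⟩ :=
    hlip.exists_solution_reaches_hyperplane hspeed_slab (half_pos hα) hx₁
      (by rw [hPK]; nlinarith [hx₁.1]) η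
  refine ⟨Fin.tail (ψ t₂), t₂, ht₂pos, ht₂T.trans_lt (by nlinarith [hx₁.1]), ?_⟩
  rw [hlip.flow_neg_eq_of_hasDerivWithinAt hΦ0 hflow ht₂pos.le hψ hψt₂, hψ0]

/-- Near the hyperplane, `a₁ > α/2`, and every point `(x₁, η)` with `x₁ ∈ (-δ, 0)` lies
on a characteristic curve issued from the hyperplane `{0} × ℝ^{d-1}`. -/
theorem stmt13 (d : ℕ) (P α β L : ℝ) (hP : 0 < P) (hα : 0 < α) (hβ : 0 < β) (hL : 0 < L)
    (a : (Fin (d+1) → ℝ) → (Fin (d+1) → ℝ))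
    (hlip : LipschitzWith (Real.toNNReal P) a)
    (hαa : ∀ ξ : Fin d → ℝ, α ≤ a (Fin.cons 0 ξ) 0)
    (hβa : ∀ ξ : Fin d → ℝ, ‖a (Fin.cons 0 ξ)‖ ≤ β)
    (ℓ δ : ℝ) (hℓ : ℓ = (1 / P) * Real.log (1 + L * P / β))
    (hδ : δ = (α / 2) * min (1 / P) ℓ)
    (Φ : ℝ → (Fin d → ℝ) → (Fin (d+1) → ℝ))
    (hΦ0 : ∀ ξ' : Fin d → ℝ, Φ 0 ξ' = Fin.cons 0 ξ')
    (hflow : ∀ (s : ℝ) (ξ' : Fin d → ℝ), HasDerivAt (fun t => Φ t ξ') (a (Φ s ξ')) s) :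
    (∀ (x₁ : ℝ) (η : Fin d → ℝ), |x₁| < δ → α / 2 < a (Fin.cons x₁ η) 0) ∧
    (∀ (x₁ : ℝ) (η : Fin d → ℝ), x₁ ∈ Set.Ioo (-δ) 0 →
      ∃ (ξ' : Fin d → ℝ) (t₂ : ℝ), 0 < t₂ ∧ t₂ < ℓ ∧ Φ (-t₂) ξ' = Fin.cons x₁ η) :=
  stmt13_general d P α hP hα a hlip hαa ℓ δ hδ Φ hΦ0 hflow
end
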